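/- Fix an integer w ≥ 1 and reals a,b,c > 0, and set a₊ = max{1, 1/a} and c₊ = max{1, 1/c}. Then for all natural numbers n and h with h ≤ w, Z_{w,n,h}(a,b,c) ≤ a₊ · c₊^h · Z_{w,n+h,0}(a,b,c). -/
import Mathlib


open Filter
open scoped Classical

noncomputable section

/-- Step value of a Boolean step: `true` is an up step (+1), `false` a down step (−1). -/
def stepVal (x : Bool) : ℤ := if x then 1 else -1

/-- Height of the walk after `k` steps. -/
def ht (σ : ℕ → Bool) (k : ℕ) : ℤ := ∑ i ∈ Finset.range k, stepVal (σ i)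

/-- Extend a finite sequence of steps to `ℕ → Bool`. -/
def extFun {n : ℕ} (σ : Fin n → Bool) : ℕ → Bool :=
  fun i => if h : i < n then σ ⟨i, h⟩ else false

/-- The first `n` steps of `σ` stay in the strip `0 ≤ y ≤ w`. -/
def IsWalk (w n : ℕ) (σ : ℕ → Bool) : Prop :=
  ∀ k ≤ n, 0 ≤ ht σ k ∧ ht σ k ≤ (w : ℤ)

/-- Number of contacts with the bottom wall (excluding the origin):
`m_a(φ) = #{1 ≤ k ≤ n : h_k = 0}`. -/
def ma (n : ℕ) (σ : ℕ → Bool) : ℕ :=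
  ((Finset.Icc 1 n).filter (fun k => ht σ k = 0)).card

/-- Number of contacts with the top wall: `m_b(φ) = #{1 ≤ k ≤ n : h_k = w}`. -/
def mb (w n : ℕ) (σ : ℕ → Bool) : ℕ :=
  ((Finset.Icc 1 n).filter (fun k => ht σ k = (w : ℤ))).card

/-- Number of stiffness points: `m_c(φ) = #{1 ≤ k ≤ n−1 : σ_k = σ_{k+1}}`. -/
def mc (n : ℕ) (σ : ℕ → Bool) : ℕ :=
  ((Finset.range (n - 1)).filter (fun i => σ i = σ (i + 1))).card

/-- Boltzmann weight of a walk: `W(φ) = a^{m_a} b^{m_b} c^{m_c}`. -/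
def wt (w n : ℕ) (a b c : ℝ) (σ : ℕ → Bool) : ℝ :=
  a ^ ma n σ * b ^ mb w n σ * c ^ mc n σ

/-- Partition function `Z_{w,n}(a,b,c)`: sum of weights over all walks of length `n`
in the strip of width `w`. -/
def Z (w n : ℕ) (a b c : ℝ) : ℝ :=
  ∑ σ ∈ Finset.univ.filter (fun σ : Fin n → Bool => IsWalk w n (extFun σ)),
    wt w n a b c (extFun σ)

/-- Fixed-endpoint partition function `Z_{w,n,h}(a,b,c)`: sum over walks of length `n`
in the strip of width `w` ending at height `h`. -/
def Zh (w n h : ℕ) (a b c : ℝ) : ℝ :=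
  ∑ σ ∈ Finset.univ.filter
      (fun σ : Fin n → Bool => IsWalk w n (extFun σ) ∧ ht (extFun σ) n = (h : ℤ)),
    wt w n a b c (extFun σ)

end

section Aux


lemma ht_succ' (σ : ℕ → Bool) (k : ℕ) : ht σ (k+1) = ht σ k + stepVal (σ k) :=
  Finset.sum_range_succ _ _

lemma extFun_ge {n : ℕ} (σ : Fin n → Bool) {i : ℕ} (hi : n ≤ i) : extFun σ i = false :=
  dif_neg (not_lt.2 hi)

lemma ht_tail {n : ℕ} {φ : ℕ → Bool} (hz : ∀ i, n ≤ i → φ i = false) (j : ℕ) :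
    ht φ (n + j) = ht φ n - j := by
  induction j with
  | zero => simp
  | succ j ih =>
    rw [← Nat.add_assoc, ht_succ', ih, hz _ (by omega)]
    simp [stepVal]; ring

lemma ma_le {n h : ℕ} {φ : ℕ → Bool} : ma n φ ≤ ma (n + h) φ :=
  Finset.card_le_card (Finset.filter_subset_filter _
    (Finset.Icc_subset_Icc_right (by omega)))

lemma ma_ge {n h : ℕ} {φ : ℕ → Bool} (hz : ∀ i, n ≤ i → φ i = false)
    (hend : ht φ n = (h : ℤ)) : ma (n + h) φ ≤ ma n φ + 1 := by
  unfold ma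
  have hsub : (Finset.Icc 1 (n+h)).filter (fun k => ht φ k = 0) ⊆
      (Finset.Icc 1 n).filter (fun k => ht φ k = 0) ∪ {n + h} := by
    intro k hk
    simp only [Finset.mem_filter, Finset.mem_Icc] at hk
    rcases le_or_gt k n with hkn | hkn
    · exact Finset.mem_union_left _ (Finset.mem_filter.2 ⟨Finset.mem_Icc.2 ⟨hk.1.1, hkn⟩, hk.2⟩)
    · have hk' : k = n + (k - n) := by omega
      have := ht_tail hz (k - n)
      rw [← hk', hend] at this
      have : (h : ℤ) - (k - n : ℕ) = 0 := by rw [← this]; exact hk.2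
      have : k = n + h := by omega
      exact Finset.mem_union_right _ (by simp [this])
  calc ((Finset.Icc 1 (n+h)).filter (fun k => ht φ k = 0)).card
      ≤ _ := Finset.card_le_card hsub
    _ ≤ _ + 1 := by
        refine le_trans (Finset.card_union_le _ _) ?_
        simp

lemma mb_eq {w n h : ℕ} {φ : ℕ → Bool} (hz : ∀ i, n ≤ i → φ i = false)
    (hend : ht φ n = (h : ℤ)) (hhw : h ≤ w) : mb w (n + h) φ = mb w n φ := by
  unfold mb
  congr 1
  apply Finset.ext
  intro k
  simp only [Finset.mem_filter, Finset.mem_Icc]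
  constructor
  · rintro ⟨⟨h1, h2⟩, h3⟩
    refine ⟨⟨h1, ?_⟩, h3⟩
    by_contra hkn
    push_neg at hkn
    have hk' : k = n + (k - n) := by omega
    have := ht_tail hz (k - n)
    rw [← hk', hend] at this
    rw [this] at h3
    omega
  · rintro ⟨⟨h1, h2⟩, h3⟩
    exact ⟨⟨h1, by omega⟩, h3⟩

lemma mc_le {n h : ℕ} {φ : ℕ → Bool} : mc n φ ≤ mc (n + h) φ :=
  Finset.card_le_card (Finset.filter_subset_filter _
    (Finset.range_subset_range.2 (by omega)))

lemma mc_ge {n h : ℕ} {φ : ℕ → Bool} : mc (n + h) φ ≤ mc n φ + h := by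
  unfold mc
  have hsub : (Finset.range (n + h - 1)).filter (fun i => φ i = φ (i+1)) ⊆
      (Finset.range (n - 1)).filter (fun i => φ i = φ (i+1)) ∪ Finset.Ico (n-1) (n+h-1) := by
    intro k hk
    simp only [Finset.mem_filter, Finset.mem_range] at hk
    rcases lt_or_ge k (n-1) with hk' | hk'
    · exact Finset.mem_union_left _ (Finset.mem_filter.2 ⟨Finset.mem_range.2 hk', hk.2⟩)
    · exact Finset.mem_union_right _ (Finset.mem_Ico.2 ⟨hk', hk.1⟩)
  refine le_trans (Finset.card_le_card hsub) (le_trans (Finset.card_union_le _ _) ?_)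
  have : (Finset.Ico (n-1) (n+h-1)).card = (n+h-1) - (n-1) := Nat.card_Ico _ _
  omega

end Aux

/-- `Z_{w,n,h} ≤ a₊ c₊^h Z_{w,n+h,0}`. -/
theorem fixed_height_le_loop (w : ℕ) (hw : 1 ≤ w) (a b c : ℝ)
    (ha : 0 < a) (hb : 0 < b) (hc : 0 < c)
    (n h : ℕ) (hhw : h ≤ w) :
    Zh w n h a b c ≤ max 1 a⁻¹ * (max 1 c⁻¹) ^ h * Zh w (n + h) 0 a b c := by
  classical
  set A := max 1 a⁻¹ with hA
  set C := max 1 c⁻¹ with hC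
  have hA1 : (1:ℝ) ≤ A := le_max_left _ _
  have hC1 : (1:ℝ) ≤ C := le_max_left _ _
  set f : (Fin n → Bool) → (Fin (n+h) → Bool) := fun σ i => extFun σ i.val with hf
  have hext : ∀ σ : Fin n → Bool, extFun (f σ) = extFun σ := by
    intro σ; funext i
    by_cases hi : i < n + h
    · simp only [extFun, hf, dif_pos hi]
    · rw [extFun_ge _ (not_lt.1 hi), extFun_ge _ (by omega)]
  have hinj : Function.Injective f := by
    intro σ σ' hσ
    funext i
    have := congrFun (congrArg extFun hσ) i.val
    rw [hext, hext] at this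
    simpa only [extFun, dif_pos i.isLt] using this
  set S := Finset.univ.filter
      (fun σ : Fin n → Bool => IsWalk w n (extFun σ) ∧ ht (extFun σ) n = (h : ℤ)) with hS
  set T := Finset.univ.filter
      (fun σ : Fin (n+h) → Bool =>
        IsWalk w (n+h) (extFun σ) ∧ ht (extFun σ) (n+h) = ((0:ℕ) : ℤ)) with hT
  have hz : ∀ σ : Fin n → Bool, ∀ i, n ≤ i → extFun σ i = false :=
    fun σ i hi => extFun_ge σ hi
  -- per-term weight inequality
  have hwt : ∀ σ ∈ S, wt w n a b c (extFun σ) ≤ A * C ^ h * wt w (n+h) a b c (extFun σ) := by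
    intro σ hσ
    obtain ⟨hwalk, hend⟩ := (Finset.mem_filter.1 hσ).2
    set φ := extFun σ
    have h1 : ma n φ ≤ ma (n+h) φ := ma_le
    have h2 : ma (n+h) φ ≤ ma n φ + 1 := ma_ge (hz σ) hend
    have h3 : mb w (n+h) φ = mb w n φ := mb_eq (hz σ) hend hhw
    have h4 : mc n φ ≤ mc (n+h) φ := mc_le
    have h5 : mc (n+h) φ ≤ mc n φ + h := mc_ge
    have hap : a ^ ma n φ ≤ A * a ^ ma (n+h) φ := by
      have hd : ma (n+h) φ = ma n φ + (ma (n+h) φ - ma n φ) := by omega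
      set d := ma (n+h) φ - ma n φ with hdd
      have hd1 : d ≤ 1 := by omega
      rw [hd, pow_add]
      interval_cases d
      · simpa using le_mul_of_one_le_left (by positivity) hA1
      · rw [pow_one]
        calc a ^ ma n φ = (a⁻¹ * a) * a ^ ma n φ := by
              rw [inv_mul_cancel₀ ha.ne', one_mul]
          _ ≤ (A * a) * a ^ ma n φ := by
              exact mul_le_mul_of_nonneg_right
                (mul_le_mul_of_nonneg_right (le_max_right 1 a⁻¹) ha.le)
                (pow_nonneg ha.le _)
          _ = A * (a ^ ma n φ * a) := by ring
    have hcp : c ^ mc n φ ≤ C ^ h * c ^ mc (n+h) φ := by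
      have hd : mc (n+h) φ = mc n φ + (mc (n+h) φ - mc n φ) := by omega
      set d := mc (n+h) φ - mc n φ with hdd
      have hd1 : d ≤ h := by omega
      rw [hd, pow_add]
      have key : (1:ℝ) ≤ C ^ h * c ^ d := by
        have e1 : (c⁻¹) ^ d ≤ C ^ d := pow_le_pow_left₀ (by positivity) (le_max_right _ _) d
        have e2 : C ^ d ≤ C ^ h := pow_le_pow_right₀ hC1 hd1
        have e3 : (c⁻¹) ^ d * c ^ d = 1 := by
          rw [← mul_pow, inv_mul_cancel₀ hc.ne', one_pow]
        calc (1:ℝ) = (c⁻¹) ^ d * c ^ d := e3.symm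
          _ ≤ C ^ h * c ^ d := by
              exact mul_le_mul_of_nonneg_right (le_trans e1 e2) (by positivity)
      calc c ^ mc n φ = 1 * c ^ mc n φ := (one_mul _).symm
        _ ≤ (C ^ h * c ^ d) * c ^ mc n φ :=
            mul_le_mul_of_nonneg_right key (by positivity)
        _ = C ^ h * (c ^ mc n φ * c ^ d) := by ring
    unfold wt
    rw [h3]
    calc a ^ ma n φ * b ^ mb w n φ * c ^ mc n φ
        ≤ (A * a ^ ma (n+h) φ) * b ^ mb w n φ * (C ^ h * c ^ mc (n+h) φ) := by
          have hb1 : (0:ℝ) < b ^ mb w n φ := by positivity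
          have := mul_le_mul hap (le_refl (b ^ mb w n φ)) hb1.le
            (by positivity : (0:ℝ) ≤ A * a ^ ma (n+h) φ)
          exact mul_le_mul this hcp (by positivity) (by positivity)
      _ = A * C ^ h * (a ^ ma (n+h) φ * b ^ mb w n φ * c ^ mc (n+h) φ) := by ring
  -- image of f lands in T, with equal weight summands
  have hmem : ∀ σ ∈ S, f σ ∈ T := by
    intro σ hσ
    obtain ⟨hwalk, hend⟩ := (Finset.mem_filter.1 hσ).2
    refine Finset.mem_filter.2 ⟨Finset.mem_univ _, ?_, ?_⟩
    · rw [hext]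
      intro k hk
      rcases le_or_gt k n with hkn | hkn
      · exact hwalk k hkn
      · have hk' : k = n + (k - n) := by omega
        have hh := ht_tail (hz σ) (k - n)
        rw [← hk', hend] at hh
        rw [hh]
        constructor
        · have : (k - n : ℕ) ≤ h := by omega
          push_cast
          omega
        · have : (k - n : ℕ) ≥ 1 := by omega
          push_cast
          omega
    · rw [hext]
      have hh := ht_tail (hz σ) h
      rw [hend] at hh
      rw [hh]
      push_cast
      ring
  have hnonneg : ∀ τ ∈ T, 0 ≤ wt w (n+h) a b c (extFun τ) := by
    intro τ _
    unfold wt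
    positivity
  calc Zh w n h a b c = ∑ σ ∈ S, wt w n a b c (extFun σ) := rfl
    _ ≤ ∑ σ ∈ S, A * C ^ h * wt w (n+h) a b c (extFun σ) := Finset.sum_le_sum hwt
    _ = A * C ^ h * ∑ σ ∈ S, wt w (n+h) a b c (extFun σ) := by rw [Finset.mul_sum]
    _ = A * C ^ h * ∑ τ ∈ S.image f, wt w (n+h) a b c (extFun τ) := by
        rw [Finset.sum_image (fun x _ y _ hxy => hinj hxy)]
        congr 1
        exact Finset.sum_congr rfl (fun σ _ => by rw [hext])
    _ ≤ A * C ^ h * ∑ τ ∈ T, wt w (n+h) a b c (extFun τ) := by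
        refine mul_le_mul_of_nonneg_left ?_ (by positivity)
        refine Finset.sum_le_sum_of_subset_of_nonneg ?_ (fun τ hτ _ => hnonneg τ hτ)
        intro τ hτ
        obtain ⟨σ, hσ, rfl⟩ := Finset.mem_image.1 hτ
        exact hmem σ hσ
    _ = A * C ^ h * Zh w (n+h) 0 a b c := rfl
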